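/- Let u : ℝ × ℝ → ℝ, u = u(t,x), be a C³ solution of the dissipative Camassa–Holm-type equation. Assume that for every t ≥ 0: the functions x ↦ u(t,x)² + u_x(t,x)² and x ↦ u u_t + u_x u_{tx} are integrable on ℝ; the flux Ψ(t,x) := u³ - u² u_{xx} - u u_{tx} + (Γ/2)u_x² - Γ u u_{xx} - (α/2)u² - (β/4)u⁴ - (γ/5)u⁵ - λ u u_x tends to 0 as x → ±∞ and x ↦ ∂_x Ψ(t,x) is integrable; and the energy ℋ₁(t) := (1/2)∫_ℝ (u(t,x)² + u_x(t,x)²) dx is differentiable in t with derivative ∫_ℝ (u u_t + u_x u_{tx}) dx. Then for all t ≥ 0: ℋ₁(t) = e^{-2λ t} ℋ₁(0); in particular, if λ ≥ 0, then ∫_ℝ (u(t,x)² + u_x(t,x)²) dx ≤ ∫_ℝ (u(0,x)² + u_x(0,x)²) dx for all t ≥ 0. -/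

import Mathlib

open MeasureTheory Filter

/-- Partial derivative with respect to the first (time) variable of a curried
function `u : ℝ → ℝ → ℝ`, `u = u t x`. -/
noncomputable def pt (u : ℝ → ℝ → ℝ) : ℝ → ℝ → ℝ := fun t x => deriv (fun s => u s x) t

/-- Partial derivative with respect to the second (space) variable of a curried
function `u : ℝ → ℝ → ℝ`, `u = u t x`. -/
noncomputable def px (u : ℝ → ℝ → ℝ) : ℝ → ℝ → ℝ := fun t x => deriv (fun y => u t y) x

/-- The flux `Ψ` of the energy conservation law of the dissipative
Camassa–Holm-type equation. -/
noncomputable def Psi (lam α β γ Γ : ℝ) (u : ℝ → ℝ → ℝ) : ℝ → ℝ → ℝ := fun t x =>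
  (u t x) ^ 3 - (u t x) ^ 2 * px (px u) t x - u t x * px (pt u) t x
    + (Γ / 2) * (px u t x) ^ 2 - Γ * u t x * px (px u) t x
    - (α / 2) * (u t x) ^ 2 - (β / 4) * (u t x) ^ 4 - (γ / 5) * (u t x) ^ 5
    - lam * u t x * px u t x

/-!
Multiplying the equation by `u` turns it into the local balance law
`u u_t + u_x u_{tx} + λ (u² + u_x²) = -∂ₓΨ`. Integrating in `x`, the flux term vanishes because
`Ψ → 0` at `±∞`, so the energy `ℋ₁` satisfies the linear ODE `ℋ₁' = -2λ ℋ₁` on `[0, ∞)`,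
whose solutions are `ℋ₁(t) = e^{-2λt} ℋ₁(0)`.
-/

open Function

section PartialDerivatives

variable {u : ℝ → ℝ → ℝ} {t x : ℝ}

theorem hasDerivAt_px_of_differentiableAt (hu : DifferentiableAt ℝ (uncurry u) (t, x)) :
    HasDerivAt (u t) (fderiv ℝ (uncurry u) (t, x) (0, 1)) x :=
  hu.hasFDerivAt.comp_hasDerivAt (f := fun y => (t, y)) x
    ((hasDerivAt_const x t).prodMk (hasDerivAt_id x))

theorem hasDerivAt_pt_of_differentiableAt (hu : DifferentiableAt ℝ (uncurry u) (t, x)) :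
    HasDerivAt (fun s => u s x) (fderiv ℝ (uncurry u) (t, x) (1, 0)) t :=
  hu.hasFDerivAt.comp_hasDerivAt (f := fun s => (s, x)) t
    ((hasDerivAt_id t).prodMk (hasDerivAt_const t x))

theorem uncurry_px_eq_fderiv (hu : Differentiable ℝ (uncurry u)) :
    uncurry (px u) = fun p => fderiv ℝ (uncurry u) p (0, 1) :=
  funext fun p => (hasDerivAt_px_of_differentiableAt (hu p)).deriv

theorem uncurry_pt_eq_fderiv (hu : Differentiable ℝ (uncurry u)) :
    uncurry (pt u) = fun p => fderiv ℝ (uncurry u) p (1, 0) :=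
  funext fun p => (hasDerivAt_pt_of_differentiableAt (hu p)).deriv

variable {m n : WithTop ℕ∞}

theorem ContDiff.uncurry_px (hu : ContDiff ℝ n (uncurry u)) (hmn : m + 1 ≤ n) :
    ContDiff ℝ m (uncurry (px u)) := by
  rw [uncurry_px_eq_fderiv (hu.differentiable (by rintro rfl; simp at hmn))]
  exact (ContinuousLinearMap.apply ℝ ℝ ((0, 1) : ℝ × ℝ)).contDiff.comp (hu.fderiv_right hmn)

theorem ContDiff.uncurry_pt (hu : ContDiff ℝ n (uncurry u)) (hmn : m + 1 ≤ n) :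
    ContDiff ℝ m (uncurry (pt u)) := by
  rw [uncurry_pt_eq_fderiv (hu.differentiable (by rintro rfl; simp at hmn))]
  exact (ContinuousLinearMap.apply ℝ ℝ ((1, 0) : ℝ × ℝ)).contDiff.comp (hu.fderiv_right hmn)

theorem ContDiff.hasDerivAt_px (hu : ContDiff ℝ n (uncurry u)) (hn : n ≠ 0) :
    HasDerivAt (u t) (px u t x) x :=
  ((hu.differentiable hn (t, x)).comp x
    ((differentiableAt_const t).prodMk differentiableAt_id)).hasDerivAt

end PartialDerivatives

def DissipativeCHAt (lam α β γ Γ : ℝ) (u : ℝ → ℝ → ℝ) (t x : ℝ) : Prop :=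
  pt u t x - px (px (pt u)) t x + 3 * u t x * px u t x + lam * (u t x - px (px u) t x)
    = 2 * px u t x * px (px u) t x + u t x * px (px (px u)) t x
      + α * px u t x + β * u t x ^ 2 * px u t x + γ * u t x ^ 3 * px u t x
      + Γ * px (px (px u)) t x

theorem hasDerivAt_Psi {lam α β γ Γ : ℝ} {u : ℝ → ℝ → ℝ}
    (hu : ContDiff ℝ 3 (uncurry u))
    {t x : ℝ} (heq : DissipativeCHAt lam α β γ Γ u t x) :
    HasDerivAt (fun y => Psi lam α β γ Γ u t y)
      (-(u t x * pt u t x + px u t x * px (pt u) t x) - lam * (u t x ^ 2 + px u t x ^ 2)) x := by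
  have hux : ContDiff ℝ 2 (uncurry (px u)) := hu.uncurry_px (by norm_num)
  have hut : ContDiff ℝ 2 (uncurry (pt u)) := hu.uncurry_pt (by norm_num)
  have hU := hu.hasDerivAt_px (t := t) (x := x) (by norm_num)
  have hUx := hux.hasDerivAt_px (t := t) (x := x) (by norm_num)
  have hUxx := (hux.uncurry_px (m := 1) (by norm_num)).hasDerivAt_px (t := t) (x := x) one_ne_zero
  have hUtx := (hut.uncurry_px (m := 1) (by norm_num)).hasDerivAt_px (t := t) (x := x) one_ne_zero
  have hΨ := ((((((((hU.pow 3).sub ((hU.pow 2).mul hUxx)).sub (hU.mul hUtx)).add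
    ((hUx.pow 2).const_mul (Γ / 2))).sub ((hU.const_mul Γ).mul hUxx)).sub
    ((hU.pow 2).const_mul (α / 2))).sub ((hU.pow 4).const_mul (β / 4))).sub
    ((hU.pow 5).const_mul (γ / 5))).sub ((hU.const_mul lam).mul hUx)
  refine hΨ.congr_deriv ?_
  simp only [Pi.pow_apply]
  unfold DissipativeCHAt at heq
  linear_combination u t x * heq

theorem integral_energy_flux {lam α β γ Γ : ℝ} {u : ℝ → ℝ → ℝ}
    (hu : ContDiff ℝ 3 (uncurry u))
    {t : ℝ} (heq : ∀ x, DissipativeCHAt lam α β γ Γ u t x) (hint : Integrable (fun x => u t x ^ 2 + px u t x ^ 2))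
    (hfluxTop : Tendsto (fun x => Psi lam α β γ Γ u t x) atTop (nhds 0))
    (hfluxBot : Tendsto (fun x => Psi lam α β γ Γ u t x) atBot (nhds 0))
    (hfluxInt : Integrable (fun x => deriv (fun y => Psi lam α β γ Γ u t y) x)) :
    ∫ x, (u t x * pt u t x + px u t x * px (pt u) t x)
      = -lam * ∫ x, (u t x ^ 2 + px u t x ^ 2) := by
  have hΨ x := hasDerivAt_Psi hu (heq x)
  have hflux : ∫ x, deriv (fun y => Psi lam α β γ Γ u t y) x = 0 := by
    simpa using integral_of_hasDerivAt_of_tendsto (fun x => (hΨ x).differentiableAt.hasDerivAt)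
      hfluxInt hfluxBot hfluxTop
  have hdensity : (fun x => u t x * pt u t x + px u t x * px (pt u) t x)
      = fun x => -deriv (fun y => Psi lam α β γ Γ u t y) x + -lam * (u t x ^ 2 + px u t x ^ 2) :=
    funext fun x => by rw [(hΨ x).deriv]; ring
  rw [hdensity, integral_add hfluxInt.fun_neg (hint.const_mul _), integral_neg, hflux,
    integral_const_mul]
  ring

theorem eq_exp_mul_of_hasDerivAt_mul_self {f : ℝ → ℝ} {c : ℝ}
    (hf : ∀ t, 0 ≤ t → HasDerivAt f (c * f t) t) (t : ℝ) (ht : 0 ≤ t) :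
    f t = Real.exp (c * t) * f 0 := by
  have hg : ∀ s, 0 ≤ s → HasDerivAt (fun r => Real.exp (-c * r) * f r) 0 s := by
    intro s hs
    have hexp : HasDerivAt (fun r => Real.exp (-c * r)) (Real.exp (-c * s) * -c) s := by
      simpa using ((hasDerivAt_id s).const_mul (-c)).exp
    exact (hexp.mul (hf s hs)).congr_deriv (by ring)
  have hconst := constant_of_has_deriv_right_zero
    (fun s hs => (hg s hs.1).continuousAt.continuousWithinAt)
    (fun s hs => (hg s hs.1).hasDerivWithinAt) t (Set.right_mem_Icc.mpr ht)
  simp only [mul_zero, Real.exp_zero, one_mul] at hconst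
  rw [← hconst, ← mul_assoc, ← Real.exp_add]
  simp

theorem stmt_4_general (lam α β γ Γ : ℝ) (u : ℝ → ℝ → ℝ)
    (hu : ContDiff ℝ 3 (Function.uncurry u))
    (heq : ∀ t x : ℝ,
      pt u t x - px (px (pt u)) t x + 3 * u t x * px u t x
          + lam * (u t x - px (px u) t x)
        = 2 * px u t x * px (px u) t x + u t x * px (px (px u)) t x
          + α * px u t x + β * (u t x) ^ 2 * px u t x + γ * (u t x) ^ 3 * px u t x
          + Γ * px (px (px u)) t x)
    (hint : ∀ t : ℝ, 0 ≤ t → Integrable (fun x => (u t x) ^ 2 + (px u t x) ^ 2))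
    (hfluxTop : ∀ t : ℝ, 0 ≤ t → Tendsto (fun x => Psi lam α β γ Γ u t x) atTop (nhds 0))
    (hfluxBot : ∀ t : ℝ, 0 ≤ t → Tendsto (fun x => Psi lam α β γ Γ u t x) atBot (nhds 0))
    (hfluxInt : ∀ t : ℝ, 0 ≤ t →
      Integrable (fun x => deriv (fun y => Psi lam α β γ Γ u t y) x))
    (hdiff : ∀ t : ℝ, 0 ≤ t →
      HasDerivAt (fun s => (1 / 2) * ∫ x : ℝ, ((u s x) ^ 2 + (px u s x) ^ 2))
        (∫ x : ℝ, (u t x * pt u t x + px u t x * px (pt u) t x)) t) :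
    (∀ t : ℝ, 0 ≤ t →
      (1 / 2) * (∫ x : ℝ, ((u t x) ^ 2 + (px u t x) ^ 2))
        = Real.exp (-(2 * lam) * t) * ((1 / 2) * ∫ x : ℝ, ((u 0 x) ^ 2 + (px u 0 x) ^ 2)))
    ∧ (0 ≤ lam → ∀ t : ℝ, 0 ≤ t →
        (∫ x : ℝ, ((u t x) ^ 2 + (px u t x) ^ 2))
          ≤ ∫ x : ℝ, ((u 0 x) ^ 2 + (px u 0 x) ^ 2)) := by
  set H : ℝ → ℝ := fun s => (1 / 2) * ∫ x, (u s x ^ 2 + px u s x ^ 2)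
  have hode : ∀ t, 0 ≤ t → HasDerivAt H (-(2 * lam) * H t) t := fun t ht => by
    convert hdiff t ht using 1
    rw [integral_energy_flux hu (heq t) (hint t ht) (hfluxTop t ht) (hfluxBot t ht) (hfluxInt t ht)]
    ring
  have hdecay := eq_exp_mul_of_hasDerivAt_mul_self hode
  refine ⟨hdecay, fun hlam t ht => ?_⟩
  have hexp_le_one : Real.exp (-(2 * lam) * t) ≤ 1 := Real.exp_le_one_iff.mpr (by nlinarith)
  have hH0 : 0 ≤ H 0 := by
    have : 0 ≤ ∫ x, (u 0 x ^ 2 + px u 0 x ^ 2) := integral_nonneg fun x => by positivity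
    positivity
  have hHt : H t ≤ H 0 := by
    rw [hdecay t ht]
    exact mul_le_of_le_one_left hH0 hexp_le_one
  simp only [H] at hHt
  linarith

/-- decay of the energy, `ℋ₁(t) = e^{-2λt} ℋ₁(0)`, and monotone
bound when `λ ≥ 0`. -/
theorem stmt_4 (lam α β γ Γ : ℝ) (u : ℝ → ℝ → ℝ)
    (hu : ContDiff ℝ 3 (Function.uncurry u))
    (heq : ∀ t x : ℝ,
      pt u t x - px (px (pt u)) t x + 3 * u t x * px u t x
          + lam * (u t x - px (px u) t x)
        = 2 * px u t x * px (px u) t x + u t x * px (px (px u)) t x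
          + α * px u t x + β * (u t x) ^ 2 * px u t x + γ * (u t x) ^ 3 * px u t x
          + Γ * px (px (px u)) t x)
    (hint : ∀ t : ℝ, 0 ≤ t → Integrable (fun x => (u t x) ^ 2 + (px u t x) ^ 2))
    (hintt : ∀ t : ℝ, 0 ≤ t →
      Integrable (fun x => u t x * pt u t x + px u t x * px (pt u) t x))
    (hfluxTop : ∀ t : ℝ, 0 ≤ t → Tendsto (fun x => Psi lam α β γ Γ u t x) atTop (nhds 0))
    (hfluxBot : ∀ t : ℝ, 0 ≤ t → Tendsto (fun x => Psi lam α β γ Γ u t x) atBot (nhds 0))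
    (hfluxInt : ∀ t : ℝ, 0 ≤ t →
      Integrable (fun x => deriv (fun y => Psi lam α β γ Γ u t y) x))
    (hdiff : ∀ t : ℝ, 0 ≤ t →
      HasDerivAt (fun s => (1 / 2) * ∫ x : ℝ, ((u s x) ^ 2 + (px u s x) ^ 2))
        (∫ x : ℝ, (u t x * pt u t x + px u t x * px (pt u) t x)) t) :
    (∀ t : ℝ, 0 ≤ t →
      (1 / 2) * (∫ x : ℝ, ((u t x) ^ 2 + (px u t x) ^ 2))
        = Real.exp (-(2 * lam) * t) * ((1 / 2) * ∫ x : ℝ, ((u 0 x) ^ 2 + (px u 0 x) ^ 2)))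
    ∧ (0 ≤ lam → ∀ t : ℝ, 0 ≤ t →
        (∫ x : ℝ, ((u t x) ^ 2 + (px u t x) ^ 2))
          ≤ ∫ x : ℝ, ((u 0 x) ^ 2 + (px u 0 x) ^ 2)) :=
  stmt_4_general lam α β γ Γ u hu heq hint hfluxTop hfluxBot hfluxInt hdiff
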